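/- Let k > 0, let n ≥ 1 be an integer, and let p : ℝ → ℝ be n times continuously differentiable on an open interval containing [0, k], with p^{(m)}(k) = 0 for every integer m with 0 ≤ m ≤ n − 2. Set C = Σ_{m=0}^{n−1} |p^{(m)}(0)|. Then for every ε > 0 there exists R > 1 such that for every z ∈ ℂ with Re z ≥ 0 and |z| > R, |∫_0^k e^{zx} p(x) dx − (−1)^{n−1} p^{(n−1)}(k) e^{kz} z^{−n}| ≤ ε e^{k Re z} |z|^{−n} + C |z|^{−1}. -/

import Mathlib

/-!
Integrating by parts `n` times writes `∫₀ᵏ e^{zx} p(x) dx` as boundary terms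
`(-1)^m z^{-m-1} (e^{kz} p^{(m)}(k) - p^{(m)}(0))`, `m < n`, plus the remainder
`(-1)^n z^{-n} ∫₀ᵏ e^{zx} p^{(n)}(x) dx`. Since `p^{(m)}(k) = 0` for `m ≤ n - 2`, only the term
`m = n - 1` survives at `k`, and the terms at `0` are bounded by `C |z|⁻¹` once `|z| ≥ 1`.
The remainder integral is `o(e^{k Re z})` as `|z| → ∞` with `Re z ≥ 0`: uniformly approximating
`p^{(n)}` by a polynomial costs an error `δ k e^{k Re z}`, and one more integration by parts shows
that the integral against the polynomial is `O(e^{k Re z} / |z|)`.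
-/

open Complex intervalIntegral Set
open MeasureTheory (volume)
open scoped Interval

section IteratedDeriv

variable {𝕜 F : Type*} [NontriviallyNormedField 𝕜] [NormedAddCommGroup F] [NormedSpace 𝕜 F]
  {f : 𝕜 → F} {U : Set 𝕜} {n m : ℕ}

theorem ContDiffOn.continuousOn_iteratedDeriv (hf : ContDiffOn 𝕜 n f U) (hU : IsOpen U)
    (hm : m ≤ n) : ContinuousOn (iteratedDeriv m f) U :=
  (hf.continuousOn_iteratedDerivWithin (by exact_mod_cast hm) hU.uniqueDiffOn).congr
    (iteratedDerivWithin_of_isOpen hU).symm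

theorem ContDiffOn.hasDerivAt_iteratedDeriv (hf : ContDiffOn 𝕜 n f U) (hU : IsOpen U)
    (hm : m < n) {x : 𝕜} (hx : x ∈ U) :
    HasDerivAt (iteratedDeriv m f) (iteratedDeriv (m + 1) f x) x := by
  have hdiff : DifferentiableOn 𝕜 (iteratedDeriv m f) U :=
    (hf.differentiableOn_iteratedDerivWithin (by exact_mod_cast hm) hU.uniqueDiffOn).congr
      (iteratedDerivWithin_of_isOpen hU).symm
  rw [iteratedDeriv_succ]
  exact (hdiff.differentiableAt (hU.mem_nhds hx)).hasDerivAt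

end IteratedDeriv

section ExpIntegral

variable {a b : ℝ} {z : ℂ}

lemma norm_cexp_mul_ofReal_le (hz : 0 ≤ z.re) {x : ℝ} (hx : x ≤ b) :
    ‖cexp (z * x)‖ ≤ Real.exp (b * z.re) := by
  rw [norm_exp, mul_re, ofReal_re, ofReal_im, mul_zero, sub_zero, Real.exp_le_exp, mul_comm]
  exact mul_le_mul_of_nonneg_right hx hz

lemma integral_cexp_mul_eq (hz : z ≠ 0) {f f' : ℝ → ℂ}
    (hf : ∀ x ∈ [[a, b]], HasDerivAt f (f' x) x) (hf' : IntervalIntegrable f' volume a b) :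
    ∫ x in a..b, cexp (z * x) * f x =
      (cexp (z * b) * f b - cexp (z * a) * f a - ∫ x in a..b, cexp (z * x) * f' x) / z := by
  have hexp (x : ℝ) : HasDerivAt (fun y : ℝ ↦ cexp (z * y)) (z * cexp (z * x)) x := by
    simpa [mul_comm] using ((hasDerivAt_id (x : ℂ)).const_mul z).cexp.comp_ofReal
  have hexp_cont : Continuous fun x : ℝ ↦ cexp (z * x) := by fun_prop
  have hf_cont : ContinuousOn f [[a, b]] := fun x hx ↦ (hf x hx).continuousAt.continuousWithinAt
  have parts := integral_deriv_mul_eq_sub (fun x _ ↦ hexp x) hf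
    ((continuous_const.mul hexp_cont).intervalIntegrable a b) hf'
  have h₁ : IntervalIntegrable (fun x : ℝ ↦ z * cexp (z * x) * f x) volume a b :=
    ((continuous_const.mul hexp_cont).continuousOn.mul hf_cont).intervalIntegrable
  have h₂ : IntervalIntegrable (fun x : ℝ ↦ cexp (z * x) * f' x) volume a b :=
    hf'.continuousOn_mul hexp_cont.continuousOn
  rw [integral_add h₁ h₂] at parts
  simp only [mul_assoc, integral_const_mul] at parts
  rw [eq_div_iff hz, ← parts]
  ring

lemma norm_integral_cexp_mul_le (hab : a ≤ b) (hz : 0 ≤ z.re) {f : ℝ → ℂ} {C : ℝ}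
    (hf : ∀ x ∈ Icc a b, ‖f x‖ ≤ C) :
    ‖∫ x in a..b, cexp (z * x) * f x‖ ≤ (b - a) * C * Real.exp (b * z.re) := by
  have h := norm_integral_le_of_norm_le_const (a := a) (b := b)
    (C := Real.exp (b * z.re) * C) (f := fun x ↦ cexp (z * x) * f x) fun x hx ↦ by
      rw [uIoc_of_le hab] at hx
      rw [norm_mul]
      exact mul_le_mul (norm_cexp_mul_ofReal_le hz hx.2) (hf x (Ioc_subset_Icc_self hx))
        (norm_nonneg _) (Real.exp_pos _).le
  rw [abs_of_nonneg (sub_nonneg.2 hab)] at h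
  linarith

lemma norm_integral_cexp_mul_le_of_hasDerivAt (hab : a ≤ b) (hz : 0 ≤ z.re) (hz₀ : z ≠ 0)
    {f f' : ℝ → ℂ} {M : ℝ} (hf : ∀ x ∈ Icc a b, HasDerivAt f (f' x) x)
    (hf' : ContinuousOn f' (Icc a b)) (hM : ∀ x ∈ Icc a b, ‖f' x‖ ≤ M) :
    ‖∫ x in a..b, cexp (z * x) * f x‖ ≤
      (‖f b‖ + ‖f a‖ + (b - a) * M) * Real.exp (b * z.re) / ‖z‖ := by
  rw [← uIcc_of_le hab] at hf hf'
  rw [integral_cexp_mul_eq hz₀ hf hf'.intervalIntegrable, norm_div]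
  gcongr
  calc _ ≤ ‖cexp (z * b) * f b‖ + ‖cexp (z * a) * f a‖ +
          ‖∫ x in a..b, cexp (z * x) * f' x‖ :=
        (norm_sub_le _ _).trans (add_le_add_left (norm_sub_le _ _) _)
    _ ≤ Real.exp (b * z.re) * ‖f b‖ + Real.exp (b * z.re) * ‖f a‖ +
          (b - a) * M * Real.exp (b * z.re) := by
        rw [norm_mul, norm_mul]
        gcongr
        · exact norm_cexp_mul_ofReal_le hz le_rfl
        · exact norm_cexp_mul_ofReal_le hz hab
        · exact norm_integral_cexp_mul_le hab hz hM
    _ = _ := by ring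

theorem exists_norm_integral_cexp_mul_le (hab : a ≤ b) {q : ℝ → ℝ}
    (hq : ContinuousOn q (Icc a b)) {ε : ℝ} (hε : 0 < ε) :
    ∃ R, ∀ z : ℂ, 0 ≤ z.re → R < ‖z‖ →
      ‖∫ x in a..b, cexp (z * x) * q x‖ ≤ ε * Real.exp (b * z.re) := by
  set δ := ε / (2 * (b - a + 1))
  have hδ : (b - a) * δ ≤ ε / 2 := by
    rw [mul_div_assoc', div_le_div_iff₀ (by linarith) two_pos]
    nlinarith
  obtain ⟨g, hg⟩ := exists_polynomial_near_of_continuousOn a b q hq δ (by positivity)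
  obtain ⟨M, hM⟩ := isCompact_Icc.exists_bound_of_continuousOn
    (continuous_ofReal.comp g.derivative.continuous).continuousOn (s := Icc a b)
  set B := ‖((g.eval b : ℝ) : ℂ)‖ + ‖((g.eval a : ℝ) : ℂ)‖ + (b - a) * M
  refine ⟨2 * |B| / ε, fun z hz hzR ↦ ?_⟩
  have hz₀ : z ≠ 0 := norm_pos_iff.1 ((by positivity : 0 ≤ 2 * |B| / ε).trans_lt hzR)
  have hE := Real.exp_pos (b * z.re)
  have happrox : ‖∫ x in a..b, cexp (z * x) * ((q x - g.eval x : ℝ) : ℂ)‖ ≤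
      ε / 2 * Real.exp (b * z.re) := by
    refine (norm_integral_cexp_mul_le hab hz (C := δ) fun x hx ↦ ?_).trans (by nlinarith)
    rw [norm_real, Real.norm_eq_abs, abs_sub_comm]
    exact (hg x hx).le
  have hpoly : ‖∫ x in a..b, cexp (z * x) * ((g.eval x : ℝ) : ℂ)‖ ≤
      ε / 2 * Real.exp (b * z.re) := by
    refine (norm_integral_cexp_mul_le_of_hasDerivAt hab hz hz₀
      (fun x _ ↦ (g.hasDerivAt x).ofReal_comp)
      (continuous_ofReal.comp g.derivative.continuous).continuousOn hM).trans ?_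
    rw [div_le_iff₀ (norm_pos_iff.2 hz₀)]
    have : B ≤ ε / 2 * ‖z‖ := by
      rw [div_lt_iff₀ hε] at hzR
      linarith [le_abs_self B]
    nlinarith
  have hcont : Continuous fun x : ℝ ↦ cexp (z * x) := by fun_prop
  have hsplit : ∫ x in a..b, cexp (z * x) * q x =
      (∫ x in a..b, cexp (z * x) * ((q x - g.eval x : ℝ) : ℂ)) +
        ∫ x in a..b, cexp (z * x) * ((g.eval x : ℝ) : ℂ) := by
    rw [← integral_add]
    · push_cast
      ring_nf
    · refine (hcont.continuousOn.mul (continuous_ofReal.comp_continuousOn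
        (hq.sub g.continuous.continuousOn))).intervalIntegrable_of_Icc hab
    · exact (hcont.mul (continuous_ofReal.comp g.continuous)).intervalIntegrable a b
  rw [hsplit]
  linarith [norm_add_le (∫ x in a..b, cexp (z * x) * ((q x - g.eval x : ℝ) : ℂ))
    (∫ x in a..b, cexp (z * x) * ((g.eval x : ℝ) : ℂ))]

theorem integral_cexp_mul_eq_sum_add {U : Set ℝ} (hU : IsOpen U) (habU : [[a, b]] ⊆ U)
    {p : ℝ → ℝ} (hz : z ≠ 0) {n : ℕ} (hp : ContDiffOn ℝ n p U) :
    ∫ x in a..b, cexp (z * x) * p x =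
      cexp (z * b) *
          ∑ m ∈ Finset.range n, (-1) ^ m * ((iteratedDeriv m p b : ℝ) : ℂ) / z ^ (m + 1) -
        cexp (z * a) *
          ∑ m ∈ Finset.range n, (-1) ^ m * ((iteratedDeriv m p a : ℝ) : ℂ) / z ^ (m + 1) +
        (-1) ^ n / z ^ n * ∫ x in a..b, cexp (z * x) * ((iteratedDeriv n p x : ℝ) : ℂ) := by
  induction n with
  | zero => simp
  | succ n ih =>
    have hpn : ContDiffOn ℝ n p U := hp.of_le (by exact_mod_cast n.le_succ)
    have hderiv (x : ℝ) (hx : x ∈ [[a, b]]) :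
        HasDerivAt (fun y ↦ ((iteratedDeriv n p y : ℝ) : ℂ))
          ((iteratedDeriv (n + 1) p x : ℝ) : ℂ) x :=
      (hp.hasDerivAt_iteratedDeriv hU (by exact_mod_cast n.lt_succ_self) (habU hx)).ofReal_comp
    have hcont : ContinuousOn (fun y ↦ ((iteratedDeriv (n + 1) p y : ℝ) : ℂ)) [[a, b]] :=
      continuous_ofReal.comp_continuousOn ((hp.continuousOn_iteratedDeriv hU le_rfl).mono habU)
    rw [ih hpn, integral_cexp_mul_eq hz hderiv hcont.intervalIntegrable, Finset.sum_range_succ,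
      Finset.sum_range_succ]
    field_simp
    ring

end ExpIntegral

lemma sum_range_neg_one_pow_mul_div_pow_succ {n : ℕ} {c : ℕ → ℂ} (hc : ∀ m ≤ n - 2, c m = 0)
    (z : ℂ) :
    ∑ m ∈ Finset.range n, (-1) ^ m * c m / z ^ (m + 1) = (-1) ^ (n - 1) * c (n - 1) / z ^ n := by
  cases n with
  | zero => simp [hc 0 le_rfl]
  | succ n =>
    rw [Finset.sum_eq_single_of_mem n (Finset.self_mem_range_succ n)]
    · simp
    · intro m hm hmn
      rw [hc m (by have := Finset.mem_range.1 hm; omega), mul_zero, zero_div]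

lemma norm_sum_neg_one_pow_mul_div_pow_succ_le {n : ℕ} (c : ℕ → ℂ) {z : ℂ} (hz : 1 ≤ ‖z‖) :
    ‖∑ m ∈ Finset.range n, (-1) ^ m * c m / z ^ (m + 1)‖ ≤
      (∑ m ∈ Finset.range n, ‖c m‖) / ‖z‖ := by
  rw [Finset.sum_div]
  refine (norm_sum_le _ _).trans (Finset.sum_le_sum fun m _ ↦ ?_)
  rw [norm_div, norm_mul, norm_pow, norm_neg, norm_one, one_pow, one_mul, norm_pow]
  exact div_le_div_of_nonneg_left (norm_nonneg _) (by linarith) (le_self_pow₀ hz m.succ_ne_zero)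

theorem stmt_15_general (k : ℝ) (hk : 0 < k) (n : ℕ) (p : ℝ → ℝ)
    (c d : ℝ) (hc : c < 0) (hd : k < d)
    (hp : ContDiffOn ℝ n p (Set.Ioo c d))
    (hpk : ∀ m : ℕ, m ≤ n - 2 → iteratedDeriv m p k = 0) :
    ∀ ε : ℝ, 0 < ε → ∃ R : ℝ, 1 < R ∧ ∀ z : ℂ, 0 ≤ z.re → R < ‖z‖ →
      ‖(∫ x in (0 : ℝ)..k, Complex.exp (z * (x : ℂ)) * (p x : ℂ)) -
        (-1) ^ (n - 1) * ((iteratedDeriv (n - 1) p k : ℝ) : ℂ) * Complex.exp (k * z) * z ^ (-(n : ℤ))‖ ≤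
      ε * Real.exp (k * z.re) * ‖z‖ ^ (-(n : ℤ)) +
        (∑ m ∈ Finset.range n, |iteratedDeriv m p 0|) * ‖z‖⁻¹ := by
  intro ε hε
  have hIcc : Icc 0 k ⊆ Ioo c d := Icc_subset_Ioo hc hd
  obtain ⟨R, hR⟩ := exists_norm_integral_cexp_mul_le hk.le
    ((hp.continuousOn_iteratedDeriv isOpen_Ioo le_rfl).mono hIcc) hε
  refine ⟨max R 2, by simp, fun z hz hzR ↦ ?_⟩
  have hz₁ : 1 ≤ ‖z‖ := by linarith [le_max_right R 2]
  have hz₀ : z ≠ 0 := norm_pos_iff.1 (by linarith)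
  set I := ∫ x in (0 : ℝ)..k, cexp (z * x) * ((iteratedDeriv n p x : ℝ) : ℂ)
  set S := ∑ m ∈ Finset.range n, (-1) ^ m * ((iteratedDeriv m p 0 : ℝ) : ℂ) / z ^ (m + 1)
  have hexpansion : (∫ x in (0 : ℝ)..k, cexp (z * x) * p x) =
      (-1) ^ (n - 1) * ((iteratedDeriv (n - 1) p k : ℝ) : ℂ) * cexp (k * z) / z ^ n - S +
        (-1) ^ n / z ^ n * I := by
    rw [integral_cexp_mul_eq_sum_add isOpen_Ioo ((uIcc_of_le hk.le).trans_subset hIcc) hz₀ hp,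
      sum_range_neg_one_pow_mul_div_pow_succ (fun m hm ↦ by rw [hpk m hm, ofReal_zero])]
    simp only [ofReal_zero, mul_zero, exp_zero, one_mul, S, I]
    rw [mul_comm z (k : ℂ)]
    ring
  rw [hexpansion, zpow_neg, zpow_natCast, zpow_neg, zpow_natCast]
  calc _ = ‖(-1) ^ n / z ^ n * I - S‖ := by congr 1; ring
    _ ≤ ‖(-1) ^ n / z ^ n * I‖ + ‖S‖ := norm_sub_le _ _
    _ ≤ ε * Real.exp (k * z.re) * (‖z‖ ^ n)⁻¹ +
        (∑ m ∈ Finset.range n, |iteratedDeriv m p 0|) * ‖z‖⁻¹ := by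
      gcongr
      · rw [norm_mul, norm_div, norm_pow, norm_pow, norm_neg, norm_one, one_pow, one_div,
          mul_comm]
        exact mul_le_mul_of_nonneg_right (hR z hz ((le_max_left R 2).trans_lt hzR)) (by positivity)
      · refine (norm_sum_neg_one_pow_mul_div_pow_succ_le _ hz₁).trans_eq ?_
        simp only [norm_real, Real.norm_eq_abs, div_eq_mul_inv]

/-- Let `k > 0`, let `n ≥ 1`, and let `p : ℝ → ℝ` be `n` times continuously
differentiable on an open interval containing `[0, k]`, with `p^{(m)}(k) = 0` for every
`0 ≤ m ≤ n - 2`. With `C = Σ_{m=0}^{n-1} |p^{(m)}(0)|`, for every `ε > 0` there exists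
`R > 1` such that for every `z` with `Re z ≥ 0` and `|z| > R`,
`‖∫_0^k e^{zx} p(x) dx - (-1)^{n-1} p^{(n-1)}(k) e^{kz} z^{-n}‖ ≤ ε e^{k Re z} |z|^{-n} + C |z|⁻¹`. -/
theorem stmt_15 (k : ℝ) (hk : 0 < k) (n : ℕ) (hn : 1 ≤ n) (p : ℝ → ℝ)
    (c d : ℝ) (hc : c < 0) (hd : k < d)
    (hp : ContDiffOn ℝ n p (Set.Ioo c d))
    (hpk : ∀ m : ℕ, m ≤ n - 2 → iteratedDeriv m p k = 0) :
    ∀ ε : ℝ, 0 < ε → ∃ R : ℝ, 1 < R ∧ ∀ z : ℂ, 0 ≤ z.re → R < ‖z‖ →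
      ‖(∫ x in (0 : ℝ)..k, Complex.exp (z * (x : ℂ)) * (p x : ℂ)) -
        (-1) ^ (n - 1) * ((iteratedDeriv (n - 1) p k : ℝ) : ℂ) * Complex.exp (k * z) * z ^ (-(n : ℤ))‖ ≤
      ε * Real.exp (k * z.re) * ‖z‖ ^ (-(n : ℤ)) +
        (∑ m ∈ Finset.range n, |iteratedDeriv m p 0|) * ‖z‖⁻¹ :=
  stmt_15_general k hk n p c d hc hd hp hpk
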